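/- For every k ∈ ℕ, the normed space (J_k, p_k) is complete: every sequence in J_k that is Cauchy with respect to the norm p_k converges in the norm p_k to an element of J_k. -/
import Mathlib


open ContinuousLinearMap
open scoped Classical

variable {H : Type*} [NormedAddCommGroup H] [InnerProductSpace ℂ H] [CompleteSpace H]

/-- `ω^ℓ(A) := T ∘ A`, as a bounded operator, when `A(H) ⊆ D(T)` and `T ∘ A` is
bounded; junk value `0` otherwise. -/
noncomputable def omegaL (T : H →ₗ.[ℂ] H) (A : H →L[ℂ] H) : H →L[ℂ] H :=
  if h : ∃ L : H →L[ℂ] H, ∀ f : H, (A f, L f) ∈ T.graph then h.choose else 0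

/-- `ω^r(A)`: the bounded extension of `f ↦ A (T f)`, when it exists;
junk value `0` otherwise. -/
noncomputable def omegaR (T : H →ₗ.[ℂ] H) (A : H →L[ℂ] H) : H →L[ℂ] H :=
  if h : ∃ R : H →L[ℂ] H, ∀ f : T.domain, R ↑f = A (T f) then h.choose else 0

/-- `ω^{ℓ,r}(A)`: the bounded extension of `f ↦ T (A (T f))`, when it exists;
junk value `0` otherwise. -/
noncomputable def omegaLR (T : H →ₗ.[ℂ] H) (A : H →L[ℂ] H) : H →L[ℂ] H :=
  if h : ∃ S : H →L[ℂ] H, ∀ f : T.domain, (A (T f), S ↑f) ∈ T.graph then h.choose else 0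

/-- The scale of semi-ideals `J_k = J_k(T)` inside `𝔄`: `J_0 = 𝔄` and
`A ∈ J_{k+1}` iff `A ∈ J_k`, the operators `ω^ℓ(A), ω^r(A), ω^{ℓ,r}(A)` exist
(as bounded operators) and belong to `J_k`. -/
def Jset (T : H →ₗ.[ℂ] H) (𝔄 : Set (H →L[ℂ] H)) : ℕ → Set (H →L[ℂ] H)
  | 0 => 𝔄
  | (k + 1) =>
    { A | A ∈ Jset T 𝔄 k ∧
      (∃ L : H →L[ℂ] H, ∀ f : H, (A f, L f) ∈ T.graph) ∧
      (∃ R : H →L[ℂ] H, ∀ f : T.domain, R ↑f = A (T f)) ∧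
      (∃ S : H →L[ℂ] H, ∀ f : T.domain, (A (T f), S ↑f) ∈ T.graph) ∧
      omegaL T A ∈ Jset T 𝔄 k ∧ omegaR T A ∈ Jset T 𝔄 k ∧ omegaLR T A ∈ Jset T 𝔄 k }

/-- The norms `p_k`: `p_0(A) = ‖A‖` and
`p_{k+1}(A) = p_k(A) + p_k(ω^ℓ(A)) + p_k(ω^r(A)) + p_k(ω^{ℓ,r}(A))`. -/
noncomputable def pnorm (T : H →ₗ.[ℂ] H) : ℕ → (H →L[ℂ] H) → ℝ
  | 0, A => ‖A‖
  | (k + 1), A =>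
      pnorm T k A + pnorm T k (omegaL T A) + pnorm T k (omegaR T A) +
        pnorm T k (omegaLR T A)

section Aux

variable {H : Type*} [NormedAddCommGroup H] [InnerProductSpace ℂ H] [CompleteSpace H]
variable (T : H →ₗ.[ℂ] H)

lemma omegaL_spec {A : H →L[ℂ] H}
    (h : ∃ L : H →L[ℂ] H, ∀ f : H, (A f, L f) ∈ T.graph) :
    ∀ f : H, (A f, omegaL T A f) ∈ T.graph := by
  rw [omegaL, dif_pos h]; exact h.choose_spec

lemma omegaL_eq {A L : H →L[ℂ] H} (hL : ∀ f : H, (A f, L f) ∈ T.graph) :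
    omegaL T A = L := by
  ext f
  exact T.mem_graph_snd_inj (omegaL_spec T ⟨L, hL⟩ f) (hL f) rfl

lemma omegaR_spec {A : H →L[ℂ] H}
    (h : ∃ R : H →L[ℂ] H, ∀ f : T.domain, R ↑f = A (T f)) :
    ∀ f : T.domain, omegaR T A ↑f = A (T f) := by
  rw [omegaR, dif_pos h]; exact h.choose_spec

lemma omegaR_eq (hdense : Dense (T.domain : Set H)) {A R : H →L[ℂ] H}
    (hR : ∀ f : T.domain, R ↑f = A (T f)) : omegaR T A = R := by
  have hspec := omegaR_spec T ⟨R, hR⟩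
  refine ContinuousLinearMap.ext_on (s := (T.domain : Set H)) ?_ ?_
  · rwa [Submodule.span_eq]
  · intro x hx
    rw [hspec ⟨x, hx⟩, hR ⟨x, hx⟩]

lemma omegaLR_spec {A : H →L[ℂ] H}
    (h : ∃ S : H →L[ℂ] H, ∀ f : T.domain, (A (T f), S ↑f) ∈ T.graph) :
    ∀ f : T.domain, (A (T f), omegaLR T A ↑f) ∈ T.graph := by
  rw [omegaLR, dif_pos h]; exact h.choose_spec

lemma omegaLR_eq (hdense : Dense (T.domain : Set H)) {A S : H →L[ℂ] H}
    (hS : ∀ f : T.domain, (A (T f), S ↑f) ∈ T.graph) : omegaLR T A = S := by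
  have hspec := omegaLR_spec T ⟨S, hS⟩
  refine ContinuousLinearMap.ext_on (s := (T.domain : Set H)) ?_ ?_
  · rwa [Submodule.span_eq]
  · intro x hx
    exact T.mem_graph_snd_inj (hspec ⟨x, hx⟩) (hS ⟨x, hx⟩) rfl

lemma omegaL_sub {A B : H →L[ℂ] H}
    (hA : ∃ L : H →L[ℂ] H, ∀ f : H, (A f, L f) ∈ T.graph)
    (hB : ∃ L : H →L[ℂ] H, ∀ f : H, (B f, L f) ∈ T.graph) :
    omegaL T (A - B) = omegaL T A - omegaL T B := by
  apply omegaL_eq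
  intro f
  have := T.graph.sub_mem (omegaL_spec T hA f) (omegaL_spec T hB f)
  simpa using this

lemma omegaR_sub (hdense : Dense (T.domain : Set H)) {A B : H →L[ℂ] H}
    (hA : ∃ R : H →L[ℂ] H, ∀ f : T.domain, R ↑f = A (T f))
    (hB : ∃ R : H →L[ℂ] H, ∀ f : T.domain, R ↑f = B (T f)) :
    omegaR T (A - B) = omegaR T A - omegaR T B := by
  apply omegaR_eq T hdense
  intro f
  simp [omegaR_spec T hA f, omegaR_spec T hB f]

lemma omegaLR_sub (hdense : Dense (T.domain : Set H)) {A B : H →L[ℂ] H}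
    (hA : ∃ S : H →L[ℂ] H, ∀ f : T.domain, (A (T f), S ↑f) ∈ T.graph)
    (hB : ∃ S : H →L[ℂ] H, ∀ f : T.domain, (B (T f), S ↑f) ∈ T.graph) :
    omegaLR T (A - B) = omegaLR T A - omegaLR T B := by
  apply omegaLR_eq T hdense
  intro f
  have := T.graph.sub_mem (omegaLR_spec T hA f) (omegaLR_spec T hB f)
  simpa using this

lemma pnorm_nonneg : ∀ k (A : H →L[ℂ] H), 0 ≤ pnorm T k A := by
  intro k
  induction k with
  | zero => intro A; exact norm_nonneg _
  | succ k ih =>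
    intro A
    have h1 := ih A; have h2 := ih (omegaL T A); have h3 := ih (omegaR T A)
    have h4 := ih (omegaLR T A)
    show 0 ≤ pnorm T k A + pnorm T k (omegaL T A) + pnorm T k (omegaR T A) +
      pnorm T k (omegaLR T A)
    linarith

lemma norm_le_pnorm : ∀ k (A : H →L[ℂ] H), ‖A‖ ≤ pnorm T k A := by
  intro k
  induction k with
  | zero => intro A; exact le_refl _
  | succ k ih =>
    intro A
    have h1 := ih A
    have h2 := pnorm_nonneg T k (omegaL T A)
    have h3 := pnorm_nonneg T k (omegaR T A)
    have h4 := pnorm_nonneg T k (omegaLR T A)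
    show ‖A‖ ≤ pnorm T k A + pnorm T k (omegaL T A) + pnorm T k (omegaR T A) +
      pnorm T k (omegaLR T A)
    linarith

lemma pnorm_tendsto {k : ℕ} {A : ℕ → H →L[ℂ] H} {B : H →L[ℂ] H}
    (h : ∀ ε : ℝ, 0 < ε → ∃ N : ℕ, ∀ n : ℕ, N ≤ n → pnorm T k (A n - B) ≤ ε) :
    Filter.Tendsto (fun n => pnorm T k (A n - B)) Filter.atTop (nhds 0) := by
  rw [Metric.tendsto_atTop]
  intro ε hε
  obtain ⟨N, hN⟩ := h (ε / 2) (by linarith)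
  refine ⟨N, fun n hn => ?_⟩
  rw [Real.dist_eq, sub_zero, abs_of_nonneg (pnorm_nonneg T k _)]
  linarith [hN n hn]

lemma apply_tendsto {k : ℕ} {A : ℕ → H →L[ℂ] H} {B : H →L[ℂ] H}
    (h : ∀ ε : ℝ, 0 < ε → ∃ N : ℕ, ∀ n : ℕ, N ≤ n → pnorm T k (A n - B) ≤ ε)
    (x : H) : Filter.Tendsto (fun n => A n x) Filter.atTop (nhds (B x)) := by
  have hnorm : Filter.Tendsto (fun n => ‖A n x - B x‖) Filter.atTop (nhds 0) := by
    apply squeeze_zero (fun n => norm_nonneg _)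
      (g := fun n => pnorm T k (A n - B) * ‖x‖)
    · intro n
      calc ‖A n x - B x‖ = ‖(A n - B) x‖ := by simp
        _ ≤ ‖A n - B‖ * ‖x‖ := (A n - B).le_opNorm x
        _ ≤ pnorm T k (A n - B) * ‖x‖ :=
            mul_le_mul_of_nonneg_right (norm_le_pnorm T k _) (norm_nonneg x)
    · simpa using (pnorm_tendsto T h).mul_const ‖x‖
  rw [tendsto_iff_norm_sub_tendsto_zero]
  exact hnorm

end Aux

/-- For every `k`, the normed space `(J_k, p_k)` is complete: every sequence in `J_k`
that is Cauchy for `p_k` converges in `p_k` to an element of `J_k`. -/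
theorem statement10 (T : H →ₗ.[ℂ] H) (hdense : Dense (T.domain : Set H))
    (hTclosed : IsClosed (T.graph : Set (H × H)))
    (𝔄 : Subalgebra ℂ (H →L[ℂ] H)) (h𝔄closed : IsClosed (𝔄 : Set (H →L[ℂ] H)))
    (h𝔄star : ∀ A ∈ 𝔄, ContinuousLinearMap.adjoint A ∈ 𝔄) (k : ℕ)
    (A : ℕ → H →L[ℂ] H) (hA : ∀ n, A n ∈ Jset T ↑𝔄 k)
    (hcauchy : ∀ ε : ℝ, 0 < ε → ∃ N : ℕ, ∀ m n : ℕ, N ≤ m → N ≤ n →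
      pnorm T k (A m - A n) ≤ ε) :
    ∃ B ∈ Jset T ↑𝔄 k, ∀ ε : ℝ, 0 < ε → ∃ N : ℕ, ∀ n : ℕ, N ≤ n →
      pnorm T k (A n - B) ≤ ε := by
  induction k generalizing A with
  | zero =>
    -- Jset T 𝔄 0 = 𝔄, pnorm 0 = operator norm
    have hcs : CauchySeq A := by
      rw [Metric.cauchySeq_iff]
      intro ε hε
      obtain ⟨N, hN⟩ := hcauchy (ε / 2) (by linarith)
      refine ⟨N, fun m hm n hn => ?_⟩
      have := hN m n hm hn
      rw [dist_eq_norm]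
      calc ‖A m - A n‖ = pnorm T 0 (A m - A n) := rfl
        _ ≤ ε / 2 := this
        _ < ε := by linarith
    obtain ⟨B, hB⟩ := cauchySeq_tendsto_of_complete hcs
    refine ⟨B, ?_, ?_⟩
    · exact h𝔄closed.mem_of_tendsto hB (Filter.Eventually.of_forall hA)
    · intro ε hε
      rw [Metric.tendsto_atTop] at hB
      obtain ⟨N, hN⟩ := hB ε hε
      refine ⟨N, fun n hn => ?_⟩
      have := hN n hn
      rw [dist_eq_norm] at this
      exact le_of_lt this
  | succ k ih =>
    have hA0 : ∀ n, A n ∈ Jset T ↑𝔄 k := fun n => (hA n).1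
    have hwL : ∀ n, ∃ L : H →L[ℂ] H, ∀ f : H, (A n f, L f) ∈ T.graph :=
      fun n => (hA n).2.1
    have hwR : ∀ n, ∃ R : H →L[ℂ] H, ∀ f : T.domain, R ↑f = A n (T f) :=
      fun n => (hA n).2.2.1
    have hwS : ∀ n, ∃ S : H →L[ℂ] H, ∀ f : T.domain, (A n (T f), S ↑f) ∈ T.graph :=
      fun n => (hA n).2.2.2.1
    set L : ℕ → H →L[ℂ] H := fun n => omegaL T (A n) with hLdef
    set R : ℕ → H →L[ℂ] H := fun n => omegaR T (A n) with hRdef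
    set S : ℕ → H →L[ℂ] H := fun n => omegaLR T (A n) with hSdef
    have hsucc : ∀ m n, pnorm T (k+1) (A m - A n) =
        pnorm T k (A m - A n) + pnorm T k (L m - L n) + pnorm T k (R m - R n) +
          pnorm T k (S m - S n) := by
      intro m n
      show pnorm T k (A m - A n) + pnorm T k (omegaL T (A m - A n)) +
          pnorm T k (omegaR T (A m - A n)) + pnorm T k (omegaLR T (A m - A n)) = _
      rw [omegaL_sub T (hwL m) (hwL n), omegaR_sub T hdense (hwR m) (hwR n),
        omegaLR_sub T hdense (hwS m) (hwS n)]
    have hcA : ∀ ε : ℝ, 0 < ε → ∃ N : ℕ, ∀ m n : ℕ, N ≤ m → N ≤ n →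
        pnorm T k (A m - A n) ≤ ε := by
      intro ε hε
      obtain ⟨N, hN⟩ := hcauchy ε hε
      refine ⟨N, fun m n hm hn => ?_⟩
      have h := hN m n hm hn
      rw [hsucc m n] at h
      have := pnorm_nonneg T k (L m - L n)
      have := pnorm_nonneg T k (R m - R n)
      have := pnorm_nonneg T k (S m - S n)
      linarith
    have hcL : ∀ ε : ℝ, 0 < ε → ∃ N : ℕ, ∀ m n : ℕ, N ≤ m → N ≤ n →
        pnorm T k (L m - L n) ≤ ε := by
      intro ε hε
      obtain ⟨N, hN⟩ := hcauchy ε hε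
      refine ⟨N, fun m n hm hn => ?_⟩
      have h := hN m n hm hn
      rw [hsucc m n] at h
      have := pnorm_nonneg T k (A m - A n)
      have := pnorm_nonneg T k (R m - R n)
      have := pnorm_nonneg T k (S m - S n)
      linarith
    have hcR : ∀ ε : ℝ, 0 < ε → ∃ N : ℕ, ∀ m n : ℕ, N ≤ m → N ≤ n →
        pnorm T k (R m - R n) ≤ ε := by
      intro ε hε
      obtain ⟨N, hN⟩ := hcauchy ε hε
      refine ⟨N, fun m n hm hn => ?_⟩
      have h := hN m n hm hn
      rw [hsucc m n] at h
      have := pnorm_nonneg T k (A m - A n)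
      have := pnorm_nonneg T k (L m - L n)
      have := pnorm_nonneg T k (S m - S n)
      linarith
    have hcS : ∀ ε : ℝ, 0 < ε → ∃ N : ℕ, ∀ m n : ℕ, N ≤ m → N ≤ n →
        pnorm T k (S m - S n) ≤ ε := by
      intro ε hε
      obtain ⟨N, hN⟩ := hcauchy ε hε
      refine ⟨N, fun m n hm hn => ?_⟩
      have h := hN m n hm hn
      rw [hsucc m n] at h
      have := pnorm_nonneg T k (A m - A n)
      have := pnorm_nonneg T k (L m - L n)
      have := pnorm_nonneg T k (R m - R n)
      linarith
    obtain ⟨B, hBmem, hBconv⟩ := ih A hA0 hcA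
    obtain ⟨BL, hBLmem, hBLconv⟩ := ih L (fun n => (hA n).2.2.2.2.1) hcL
    obtain ⟨BR, hBRmem, hBRconv⟩ := ih R (fun n => (hA n).2.2.2.2.2.1) hcR
    obtain ⟨BS, hBSmem, hBSconv⟩ := ih S (fun n => (hA n).2.2.2.2.2.2) hcS
    -- pointwise limits
    have hApt := apply_tendsto T hBconv
    have hLpt := apply_tendsto T hBLconv
    have hRpt := apply_tendsto T hBRconv
    have hSpt := apply_tendsto T hBSconv
    -- B has the three witnesses
    have hBL : ∀ f : H, (B f, BL f) ∈ T.graph := by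
      intro f
      refine hTclosed.mem_of_tendsto ((hApt f).prodMk_nhds (hLpt f))
        (Filter.Eventually.of_forall fun n => ?_)
      exact omegaL_spec T (hwL n) f
    have hBR : ∀ f : T.domain, BR ↑f = B (T f) := by
      intro f
      refine tendsto_nhds_unique (hRpt ↑f) ?_
      have : ∀ n, R n ↑f = A n (T f) := fun n => omegaR_spec T (hwR n) f
      simp only [this]
      exact hApt (T f)
    have hBS : ∀ f : T.domain, (B (T f), BS ↑f) ∈ T.graph := by
      intro f
      refine hTclosed.mem_of_tendsto ((hApt (T f)).prodMk_nhds (hSpt ↑f))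
        (Filter.Eventually.of_forall fun n => ?_)
      exact omegaLR_spec T (hwS n) f
    have hoL : omegaL T B = BL := omegaL_eq T hBL
    have hoR : omegaR T B = BR := omegaR_eq T hdense hBR
    have hoS : omegaLR T B = BS := omegaLR_eq T hdense hBS
    refine ⟨B, ⟨hBmem, ⟨BL, hBL⟩, ⟨BR, hBR⟩, ⟨BS, hBS⟩, ?_, ?_, ?_⟩, ?_⟩
    · rw [hoL]; exact hBLmem
    · rw [hoR]; exact hBRmem
    · rw [hoS]; exact hBSmem
    · intro ε hε
      obtain ⟨N1, hN1⟩ := hBconv (ε / 4) (by linarith)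
      obtain ⟨N2, hN2⟩ := hBLconv (ε / 4) (by linarith)
      obtain ⟨N3, hN3⟩ := hBRconv (ε / 4) (by linarith)
      obtain ⟨N4, hN4⟩ := hBSconv (ε / 4) (by linarith)
      refine ⟨max (max N1 N2) (max N3 N4), fun n hn => ?_⟩
      have hn1 : N1 ≤ n := le_trans (le_trans (le_max_left _ _) (le_max_left _ _)) hn
      have hn2 : N2 ≤ n := le_trans (le_trans (le_max_right _ _) (le_max_left _ _)) hn
      have hn3 : N3 ≤ n := le_trans (le_trans (le_max_left _ _) (le_max_right _ _)) hn
      have hn4 : N4 ≤ n := le_trans (le_trans (le_max_right _ _) (le_max_right _ _)) hn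
      have heq : pnorm T (k+1) (A n - B) =
          pnorm T k (A n - B) + pnorm T k (L n - BL) + pnorm T k (R n - BR) +
            pnorm T k (S n - BS) := by
        show pnorm T k (A n - B) + pnorm T k (omegaL T (A n - B)) +
            pnorm T k (omegaR T (A n - B)) + pnorm T k (omegaLR T (A n - B)) = _
        rw [omegaL_sub T (hwL n) ⟨BL, hBL⟩, omegaR_sub T hdense (hwR n) ⟨BR, hBR⟩,
          omegaLR_sub T hdense (hwS n) ⟨BS, hBS⟩, hoL, hoR, hoS]
      rw [heq]
      linarith [hN1 n hn1, hN2 n hn2, hN3 n hn3, hN4 n hn4]
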